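/- There exist constants C₂ > 0 and R₀ > 0 such that for every R ≥ R₀ and every time t ∈ (0, t₁(R)) at which −π ≤ θ_R(t) ≤ 0 and r_R(t) ≥ √(2(n−1)/m), one has x_R(t) ≤ C₂/R. -/

import Mathlib

/-!
Before the first exit, `θ ∈ (-π, 0)` and `x > 0`, so `r` decreases and, wherever `cos θ ≥ 0`,
`θ' ≤ ((n-1)/r - r m/2) cos θ`, whose coefficient is nonpositive by the lower bound on `r`.
Hence `θ` decreases wherever `cos θ ≥ 0`, and once `cos θ ≤ e := 32π/(mR²)` it stays so.

While `cos θ > e` and `r ≥ R/2`, `θ` falls at rate at least `4π/R`; as `θ > -π` and `r ≥ R - s`,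
this phase ends before time `R/4`, and during it `x + 8θ/(mR)` is nonincreasing, so
`x ≤ 8π/(mR)`. Afterwards `cos θ ≤ e ≤ 1/2` gives `cos θ + 2e sin θ ≤ 0`, so `x + 2e r` is
nonincreasing and `x` grows by at most `2eR = 64π/(mR)`.
-/

/-- The arc-length system (1.5): `x' = cos θ`, `r' = sin θ`,
`θ' = ((n-1)/r - (r/2) f'(x²+r²)) cos θ + (x/2) f'(x²+r²) sin θ` on the set `s`. -/
def SolvesSystem (n : ℕ) (f : ℝ → ℝ) (x r θ : ℝ → ℝ) (s : Set ℝ) : Prop :=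
  ∀ t ∈ s,
    HasDerivAt x (Real.cos (θ t)) t ∧
    HasDerivAt r (Real.sin (θ t)) t ∧
    HasDerivAt θ
      ((((n : ℝ) - 1) / r t - r t / 2 * deriv f (x t ^ 2 + r t ^ 2)) * Real.cos (θ t)
        + x t / 2 * deriv f (x t ^ 2 + r t ^ 2) * Real.sin (θ t)) t

/-- None of the exit events `θ = 0`, `θ = -π`, `x = 0`, `r = 0` occurs on `s`. -/
def NoExit (x r θ : ℝ → ℝ) (s : Set ℝ) : Prop :=
  ∀ t ∈ s, θ t ≠ 0 ∧ θ t ≠ -Real.pi ∧ x t ≠ 0 ∧ r t ≠ 0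

open Set Real Topology

theorem sub_le_mul_sub_of_hasDerivAt_le {F F' : ℝ → ℝ} {a b C : ℝ} (hab : a ≤ b)
    (hF : ∀ s ∈ Icc a b, HasDerivAt F (F' s) s) (hF' : ∀ s ∈ Ioo a b, F' s ≤ C) :
    F b - F a ≤ C * (b - a) := by
  refine (convex_Icc a b).image_sub_le_mul_sub_of_deriv_le
    (fun s hs => (hF s hs).continuousAt.continuousWithinAt) ?_ ?_ a (left_mem_Icc.2 hab) b
    (right_mem_Icc.2 hab) hab <;> rw [interior_Icc]
  · exact fun s hs => (hF s (Ioo_subset_Icc_self hs)).differentiableAt.differentiableWithinAt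
  · exact fun s hs => (hF s (Ioo_subset_Icc_self hs)).deriv ▸ hF' s hs

theorem ContinuousOn.lt_of_lt_of_forall_ne {g : ℝ → ℝ} {a b c : ℝ}
    (hg : ContinuousOn g (uIcc a b)) (hne : ∀ s ∈ uIcc a b, g s ≠ c) (ha : g a < c) : g b < c := by
  by_contra! hb
  obtain ⟨s, hs, rfl⟩ := intermediate_value_uIcc hg (mem_uIcc.2 (Or.inl ⟨ha.le, hb⟩))
  exact hne s hs rfl

theorem ContinuousOn.lt_of_lt_of_forall_ne' {g : ℝ → ℝ} {a b c : ℝ}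
    (hg : ContinuousOn g (uIcc a b)) (hne : ∀ s ∈ uIcc a b, g s ≠ c) (ha : c < g a) : c < g b := by
  by_contra! hb
  obtain ⟨s, hs, rfl⟩ := intermediate_value_uIcc hg (mem_uIcc.2 (Or.inr ⟨hb, ha.le⟩))
  exact hne s hs rfl

theorem HasDerivAt.eventually_gt_right {g : ℝ → ℝ} {g' a : ℝ} (hg : HasDerivAt g g' a)
    (hg' : 0 < g') : ∀ᶠ s in 𝓝[>] a, g a < g s := by
  have hslope : ∀ᶠ s in 𝓝[>] a, 0 < slope g a s :=
    (hasDerivAt_iff_tendsto_slope.1 hg).eventually (eventually_gt_nhds hg')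
      |>.filter_mono (nhdsGT_le_nhdsNE a)
  filter_upwards [hslope, self_mem_nhdsWithin] with s hs has
  exact (slope_pos_iff_of_le has.le).1 hs

theorem ContinuousOn.exists_first_le {g : ℝ → ℝ} {a b c : ℝ} (hg : ContinuousOn g (Icc a b))
    (h : ∃ s ∈ Icc a b, g s ≤ c) : ∃ σ ∈ Icc a b, g σ ≤ c ∧ ∀ s ∈ Ico a σ, c < g s := by
  set S := Icc a b ∩ g ⁻¹' Iic c
  have hS : IsClosed S := hg.preimage_isClosed_of_isClosed isClosed_Icc isClosed_Iic
  have hbdd : BddBelow S := ⟨a, fun s hs => hs.1.1⟩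
  obtain ⟨hσ, hgσ⟩ := hS.csInf_mem h hbdd
  refine ⟨sInf S, hσ, hgσ, fun s hs => ?_⟩
  by_contra! hgs
  exact hs.2.not_ge (csInf_le hbdd ⟨⟨hs.1, hs.2.le.trans hσ.2⟩, hgs⟩)

theorem le_of_hasDerivAt_nonpos_of_lt {g g' : ℝ → ℝ} {a b c : ℝ}
    (hg : ∀ s ∈ Icc a b, HasDerivAt g (g' s) s) (ha : g a ≤ c)
    (h : ∀ s ∈ Ioo a b, c < g s → g' s ≤ 0) : ∀ s ∈ Icc a b, g s ≤ c := by
  intro s hs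
  by_contra! hgs
  set U := Icc a s ∩ g ⁻¹' Iic c
  have hU : IsClosed U := ContinuousOn.preimage_isClosed_of_isClosed
    (fun u hu => (hg u ⟨hu.1, hu.2.trans hs.2⟩).continuousAt.continuousWithinAt)
    isClosed_Icc isClosed_Iic
  have hbdd : BddAbove U := ⟨s, fun u hu => hu.1.2⟩
  obtain ⟨⟨hs₁a, hs₁s⟩, hgs₁⟩ := hU.csSup_mem ⟨a, ⟨le_rfl, hs.1⟩, ha⟩ hbdd
  set s₁ := sSup U
  have hlt : ∀ u ∈ Ioc s₁ s, c < g u := fun u hu => by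
    by_contra! hgu
    exact hu.1.not_ge (le_csSup hbdd ⟨⟨hs₁a.trans hu.1.le, hu.2⟩, hgu⟩)
  have := sub_le_mul_sub_of_hasDerivAt_le hs₁s
    (fun u hu => hg u ⟨hs₁a.trans hu.1, hu.2.trans hs.2⟩)
    (fun u hu => h u ⟨hs₁a.trans_lt hu.1, hu.2.trans_le hs.2⟩ (hlt u ⟨hu.1, hu.2.le⟩))
  linarith [show g s₁ ≤ c from hgs₁]

theorem cos_add_two_mul_sin_nonpos {a e : ℝ} (he : 0 ≤ e) (he' : e ≤ 1 / 2) (ha : cos a ≤ e)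
    (hsin : sin a ≤ 0) : cos a + 2 * e * sin a ≤ 0 := by
  rcases le_or_gt (cos a) 0 with hc | hc
  · nlinarith
  · have : sin a ≤ -(1 / 2) := by nlinarith [sin_sq_add_cos_sq a]
    nlinarith

noncomputable def thetaRHS (n : ℕ) (f : ℝ → ℝ) (x r θ : ℝ) : ℝ :=
  (((n : ℝ) - 1) / r - r / 2 * deriv f (x ^ 2 + r ^ 2)) * cos θ
    + x / 2 * deriv f (x ^ 2 + r ^ 2) * sin θ

theorem thetaRHS_le {n : ℕ} {f : ℝ → ℝ} {m x r θ : ℝ} (hm : 0 ≤ m)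
    (hf : ∀ s, m ≤ deriv f s) (hx : 0 ≤ x) (hr : 0 ≤ r) (hcos : 0 ≤ cos θ) (hsin : sin θ ≤ 0) :
    thetaRHS n f x r θ ≤ (((n : ℝ) - 1) / r - r * m / 2) * cos θ := by
  have hf' := hf (x ^ 2 + r ^ 2)
  have hsin_term : x / 2 * deriv f (x ^ 2 + r ^ 2) * sin θ ≤ 0 :=
    mul_nonpos_of_nonneg_of_nonpos (by nlinarith) hsin
  have hcoeff : ((n : ℝ) - 1) / r - r / 2 * deriv f (x ^ 2 + r ^ 2)
      ≤ ((n : ℝ) - 1) / r - r * m / 2 := by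
    nlinarith
  unfold thetaRHS
  nlinarith [mul_le_mul_of_nonneg_right hcoeff hcos]

theorem div_sub_mul_div_two_nonpos {a m r : ℝ} (hr : 0 < r) (h : 2 * a ≤ m * r ^ 2) :
    a / r - r * m / 2 ≤ 0 := by
  rw [sub_nonpos, div_le_iff₀ hr]
  linarith

theorem div_sub_mul_div_two_le {a m r R : ℝ} (hm : 0 ≤ m) (hR : 0 < R) (hr : R / 2 ≤ r)
    (h : 16 * a ≤ m * R ^ 2) : a / r - r * m / 2 ≤ -(m * R / 8) := by
  have hr0 : 0 < r := by linarith
  have : a / r ≤ m * R / 8 := by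
    rw [div_le_iff₀ hr0]
    nlinarith [mul_le_mul_of_nonneg_left hr (by positivity : 0 ≤ m * R / 8)]
  nlinarith

structure IsPreExitArc (n : ℕ) (m : ℝ) (f x r θ : ℝ → ℝ) (R t : ℝ) : Prop where
  m_pos : 0 < m
  le_deriv : ∀ s, m ≤ deriv f s
  t_pos : 0 < t
  x_zero : x 0 = 0
  r_zero : r 0 = R
  θ_zero : θ 0 = 0
  solves : SolvesSystem n f x r θ (Icc 0 t)
  noExit : NoExit x r θ (Ioc 0 t)
  θ_le : θ t ≤ 0
  sqrt_le_r : √(2 * ((n : ℝ) - 1) / m) ≤ r t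

namespace IsPreExitArc

variable {n : ℕ} {m R t : ℝ} {f x r θ : ℝ → ℝ}

theorem hasDerivAt_x (h : IsPreExitArc n m f x r θ R t) :
    ∀ s ∈ Icc 0 t, HasDerivAt x (cos (θ s)) s := fun s hs => (h.solves s hs).1

theorem hasDerivAt_r (h : IsPreExitArc n m f x r θ R t) :
    ∀ s ∈ Icc 0 t, HasDerivAt r (sin (θ s)) s := fun s hs => (h.solves s hs).2.1

theorem hasDerivAt_θ (h : IsPreExitArc n m f x r θ R t) :
    ∀ s ∈ Icc 0 t, HasDerivAt θ (thetaRHS n f (x s) (r s) (θ s)) s :=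
  fun s hs => (h.solves s hs).2.2

theorem continuousOn_x (h : IsPreExitArc n m f x r θ R t) : ContinuousOn x (Icc 0 t) :=
  fun s hs => (h.hasDerivAt_x s hs).continuousAt.continuousWithinAt

theorem continuousOn_θ (h : IsPreExitArc n m f x r θ R t) : ContinuousOn θ (Icc 0 t) :=
  fun s hs => (h.hasDerivAt_θ s hs).continuousAt.continuousWithinAt

theorem θ_neg (h : IsPreExitArc n m f x r θ R t) : ∀ s ∈ Ioc 0 t, θ s < 0 := by
  intro s hs
  have hsub : uIcc t s ⊆ Ioc 0 t := by rw [uIcc_of_ge hs.2]; exact Icc_subset_Ioc hs.1 le_rfl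
  exact (h.continuousOn_θ.mono (hsub.trans Ioc_subset_Icc_self)).lt_of_lt_of_forall_ne
    (fun u hu => (h.noExit u (hsub hu)).1)
    (h.θ_le.lt_of_ne (h.noExit t ⟨h.t_pos, le_rfl⟩).1)

theorem neg_pi_lt_θ (h : IsPreExitArc n m f x r θ R t) : ∀ s ∈ Icc 0 t, -π < θ s := by
  intro s hs
  have hsub : uIcc 0 s ⊆ Icc 0 t := by rw [uIcc_of_le hs.1]; exact Icc_subset_Icc le_rfl hs.2
  refine (h.continuousOn_θ.mono hsub).lt_of_lt_of_forall_ne' (fun u hu => ?_)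
    (by rw [h.θ_zero]; exact neg_lt_zero.2 pi_pos)
  rcases (hsub hu).1.eq_or_lt with rfl | hu0
  · rw [h.θ_zero]; exact (neg_ne_zero.2 pi_ne_zero).symm
  · exact (h.noExit u ⟨hu0, (hsub hu).2⟩).2.1

theorem sin_θ_nonpos (h : IsPreExitArc n m f x r θ R t) : ∀ s ∈ Icc 0 t, sin (θ s) ≤ 0 := by
  intro s hs
  rcases hs.1.eq_or_lt with rfl | hs0
  · rw [h.θ_zero, sin_zero]
  · exact (sin_neg_of_neg_of_neg_pi_lt (h.θ_neg s ⟨hs0, hs.2⟩) (h.neg_pi_lt_θ s hs)).le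

theorem x_pos (h : IsPreExitArc n m f x r θ R t) : ∀ s ∈ Ioc 0 t, 0 < x s := by
  intro s hs
  have hx0 := h.hasDerivAt_x 0 ⟨le_rfl, h.t_pos.le⟩
  rw [h.θ_zero, cos_zero] at hx0
  obtain ⟨u, hxu, hu⟩ := ((hx0.eventually_gt_right one_pos).and (Ioo_mem_nhdsGT hs.1)).exists
  rw [h.x_zero] at hxu
  have hsub : uIcc u s ⊆ Ioc 0 t := by
    rw [uIcc_of_le hu.2.le]; exact Icc_subset_Ioc hu.1 hs.2
  exact (h.continuousOn_x.mono (hsub.trans Ioc_subset_Icc_self)).lt_of_lt_of_forall_ne'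
    (fun v hv => (h.noExit v (hsub hv)).2.2.1) hxu

theorem antitoneOn_r (h : IsPreExitArc n m f x r θ R t) : AntitoneOn r (Icc 0 t) := by
  intro a ha b hb hab
  have := sub_le_mul_sub_of_hasDerivAt_le hab
    (fun s hs => h.hasDerivAt_r s (Icc_subset_Icc ha.1 hb.2 hs))
    (fun s hs => h.sin_θ_nonpos s ⟨ha.1.trans hs.1.le, hs.2.le.trans hb.2⟩)
  linarith

theorem r_le (h : IsPreExitArc n m f x r θ R t) {s : ℝ} (hs : s ∈ Icc 0 t) : r s ≤ R :=
  h.r_zero ▸ h.antitoneOn_r ⟨le_rfl, h.t_pos.le⟩ hs hs.1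

theorem sub_le_r (h : IsPreExitArc n m f x r θ R t) {s : ℝ} (hs : s ∈ Icc 0 t) :
    R - s ≤ r s := by
  have := sub_le_mul_sub_of_hasDerivAt_le (F := fun u => -r u) hs.1
    (fun u hu => (h.hasDerivAt_r u (Icc_subset_Icc le_rfl hs.2 hu)).neg)
    (fun u _ => neg_le.2 (neg_one_le_sin _))
  linarith [h.r_zero]

theorem r_pos (h : IsPreExitArc n m f x r θ R t) {s : ℝ} (hs : s ∈ Icc 0 t) : 0 < r s := by
  have hrt : 0 < r t := (sqrt_nonneg _ |>.trans h.sqrt_le_r).lt_of_ne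
    (h.noExit t ⟨h.t_pos, le_rfl⟩).2.2.2.symm
  exact hrt.trans_le (h.antitoneOn_r hs ⟨h.t_pos.le, le_rfl⟩ hs.2)

theorem R_pos (h : IsPreExitArc n m f x r θ R t) : 0 < R :=
  (h.r_pos ⟨le_rfl, h.t_pos.le⟩).trans_le (h.r_le ⟨le_rfl, h.t_pos.le⟩)

theorem two_mul_le_mul_sq (h : IsPreExitArc n m f x r θ R t) {s : ℝ} (hs : s ∈ Icc 0 t) :
    2 * ((n : ℝ) - 1) ≤ m * r s ^ 2 := by
  obtain ⟨hrt, hsq⟩ := sqrt_le_iff.1 h.sqrt_le_r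
  rw [div_le_iff₀ h.m_pos] at hsq
  have := pow_le_pow_left₀ hrt (h.antitoneOn_r hs ⟨h.t_pos.le, le_rfl⟩ hs.2) 2
  nlinarith [h.m_pos]

theorem thetaRHS_nonpos (h : IsPreExitArc n m f x r θ R t) {s : ℝ} (hs : s ∈ Ioc 0 t)
    (hcos : 0 ≤ cos (θ s)) : thetaRHS n f (x s) (r s) (θ s) ≤ 0 :=
  (thetaRHS_le h.m_pos.le h.le_deriv (h.x_pos s hs).le (h.r_pos (Ioc_subset_Icc_self hs)).le hcos
    (h.sin_θ_nonpos s (Ioc_subset_Icc_self hs))).trans <| mul_nonpos_of_nonpos_of_nonneg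
    (div_sub_mul_div_two_nonpos (h.r_pos (Ioc_subset_Icc_self hs))
      (h.two_mul_le_mul_sq (Ioc_subset_Icc_self hs))) hcos

theorem thetaRHS_le_of_half_le (h : IsPreExitArc n m f x r θ R t)
    (hR : 16 * ((n : ℝ) - 1) ≤ m * R ^ 2) {s : ℝ} (hs : s ∈ Ioc 0 t) (hcos : 0 ≤ cos (θ s))
    (hr : R / 2 ≤ r s) : thetaRHS n f (x s) (r s) (θ s) ≤ -(m * R / 8) * cos (θ s) :=
  (thetaRHS_le h.m_pos.le h.le_deriv (h.x_pos s hs).le (h.r_pos (Ioc_subset_Icc_self hs)).le hcos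
    (h.sin_θ_nonpos s (Ioc_subset_Icc_self hs))).trans <| mul_le_mul_of_nonneg_right
    (div_sub_mul_div_two_le h.m_pos.le h.R_pos hr hR) hcos

theorem lt_div_four_of_lt_cos (h : IsPreExitArc n m f x r θ R t)
    (hR : 64 * π + 16 * n ≤ m * R ^ 2) {σ : ℝ} (hσ : σ ∈ Icc 0 t)
    (hcos : ∀ s ∈ Ioo 0 σ, 32 * π / (m * R ^ 2) < cos (θ s)) : σ < R / 4 := by
  by_contra! hσR
  have hR0 := h.R_pos
  have hm := h.m_pos
  have he : 0 ≤ 32 * π / (m * R ^ 2) := by positivity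
  have hτ : R / 4 ∈ Icc 0 t := ⟨by positivity, hσR.trans hσ.2⟩
  have hfall := sub_le_mul_sub_of_hasDerivAt_le (C := -(4 * π / R)) hτ.1
    (fun s hs => h.hasDerivAt_θ s (Icc_subset_Icc le_rfl hτ.2 hs)) fun s hs => by
      have hs' : s ∈ Ioc 0 t := ⟨hs.1, hs.2.le.trans hτ.2⟩
      have hc := hcos s ⟨hs.1, hs.2.trans_le hσR⟩
      have hr : R / 2 ≤ r s := by linarith [h.sub_le_r (Ioc_subset_Icc_self hs'), hs.2]
      calc thetaRHS n f (x s) (r s) (θ s) ≤ -(m * R / 8) * cos (θ s) :=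
            h.thetaRHS_le_of_half_le (by linarith [pi_pos]) hs' (he.trans hc.le) hr
        _ ≤ -(m * R / 8) * (32 * π / (m * R ^ 2)) :=
            mul_le_mul_of_nonpos_left hc.le (by nlinarith)
        _ = -(4 * π / R) := by field_simp; ring
  have hθ := h.neg_pi_lt_θ _ hτ
  rw [h.θ_zero, sub_zero, sub_zero, show -(4 * π / R) * (R / 4) = -π by field_simp] at hfall
  linarith

theorem x_le_of_lt_cos (h : IsPreExitArc n m f x r θ R t)
    (hR : 64 * π + 16 * n ≤ m * R ^ 2) {σ : ℝ} (hσ : σ ∈ Icc 0 t)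
    (hcos : ∀ s ∈ Ioo 0 σ, 32 * π / (m * R ^ 2) < cos (θ s)) : x σ ≤ 8 * π / (m * R) := by
  have hσR := h.lt_div_four_of_lt_cos hR hσ hcos
  have hR0 := h.R_pos
  have hm := h.m_pos
  have he : 0 ≤ 32 * π / (m * R ^ 2) := by positivity
  have hsub : Icc 0 σ ⊆ Icc 0 t := Icc_subset_Icc le_rfl hσ.2
  have hmono := sub_le_mul_sub_of_hasDerivAt_le (C := 0) (F := fun s => x s + 8 / (m * R) * θ s)
    hσ.1 (fun s hs => (h.hasDerivAt_x s (hsub hs)).add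
      ((h.hasDerivAt_θ s (hsub hs)).const_mul (8 / (m * R)))) fun s hs => by
      have hs' : s ∈ Ioc 0 t := ⟨hs.1, hs.2.le.trans hσ.2⟩
      have hc := (hcos s hs).le
      have hr : R / 2 ≤ r s := by linarith [h.sub_le_r (Ioc_subset_Icc_self hs'), hs.2]
      have hθ' := h.thetaRHS_le_of_half_le (by linarith [pi_pos]) hs' (he.trans hc) hr
      calc cos (θ s) + 8 / (m * R) * thetaRHS n f (x s) (r s) (θ s)
          ≤ cos (θ s) + 8 / (m * R) * (-(m * R / 8) * cos (θ s)) := by gcongr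
        _ = 0 := by field_simp; ring
  have hθ := h.neg_pi_lt_θ σ hσ
  have h8 : 0 < 8 / (m * R) := by positivity
  simp only [h.x_zero, h.θ_zero, mul_zero, add_zero, zero_mul, sub_nonpos] at hmono
  calc x σ ≤ 8 / (m * R) * π := by nlinarith
    _ = 8 * π / (m * R) := by ring

theorem cos_θ_le_of_cos_θ_le (h : IsPreExitArc n m f x r θ R t) {e σ : ℝ} (he : 0 ≤ e)
    (hσ : σ ∈ Icc 0 t) (hσe : cos (θ σ) ≤ e) : ∀ s ∈ Icc σ t, cos (θ s) ≤ e :=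
  le_of_hasDerivAt_nonpos_of_lt (fun s hs => (h.hasDerivAt_θ s ⟨hσ.1.trans hs.1, hs.2⟩).cos) hσe
    fun s hs hc => mul_nonpos_of_nonneg_of_nonpos
      (neg_nonneg.2 (h.sin_θ_nonpos s ⟨hσ.1.trans hs.1.le, hs.2.le⟩))
      (h.thetaRHS_nonpos ⟨hσ.1.trans_lt hs.1, hs.2.le⟩ (he.trans hc.le))

theorem x_le_add_of_cos_θ_le (h : IsPreExitArc n m f x r θ R t) {e σ : ℝ} (he : 0 ≤ e)
    (he' : e ≤ 1 / 2) (hσ : σ ∈ Icc 0 t) (hcos : ∀ s ∈ Ioo σ t, cos (θ s) ≤ e) :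
    x t ≤ x σ + 2 * e * R := by
  have hsub : Icc σ t ⊆ Icc 0 t := Icc_subset_Icc hσ.1 le_rfl
  have hmono := sub_le_mul_sub_of_hasDerivAt_le (C := 0) (F := fun s => x s + 2 * e * r s)
    hσ.2 (fun s hs => (h.hasDerivAt_x s (hsub hs)).add
      ((h.hasDerivAt_r s (hsub hs)).const_mul (2 * e))) fun s hs =>
      cos_add_two_mul_sin_nonpos he he' (hcos s hs)
        (h.sin_θ_nonpos s (hsub (Ioo_subset_Icc_self hs)))
  have hrt := h.r_pos ⟨h.t_pos.le, le_rfl⟩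
  have hrσ := h.r_le hσ
  nlinarith

theorem x_le (h : IsPreExitArc n m f x r θ R t) (hR : 64 * π + 16 * n ≤ m * R ^ 2) :
    x t ≤ 72 * π / (m * R) := by
  have hR0 := h.R_pos
  have hm := h.m_pos
  have he : 0 ≤ 32 * π / (m * R ^ 2) := by positivity
  have he' : 32 * π / (m * R ^ 2) ≤ 1 / 2 := by
    rw [div_le_iff₀ (by positivity)]; linarith [(n.cast_nonneg : (0 : ℝ) ≤ n)]
  by_cases hhit : ∃ s ∈ Icc 0 t, cos (θ s) ≤ 32 * π / (m * R ^ 2)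
  · obtain ⟨σ, hσ, hσe, hlt⟩ :=
      (continuous_cos.comp_continuousOn h.continuousOn_θ).exists_first_le hhit
    have h₁ := h.x_le_of_lt_cos hR hσ fun s hs => hlt s ⟨hs.1.le, hs.2⟩
    have h₂ := h.x_le_add_of_cos_θ_le he he' hσ fun s hs =>
      h.cos_θ_le_of_cos_θ_le he hσ hσe s ⟨hs.1.le, hs.2.le⟩
    calc x t ≤ 8 * π / (m * R) + 2 * (32 * π / (m * R ^ 2)) * R := h₂.trans (by gcongr)
      _ = 72 * π / (m * R) := by field_simp; ring
  · simp only [not_exists, not_and, not_le] at hhit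
    calc x t ≤ 8 * π / (m * R) :=
          h.x_le_of_lt_cos hR ⟨h.t_pos.le, le_rfl⟩ fun s hs => hhit s ⟨hs.1.le, hs.2.le⟩
      _ ≤ 72 * π / (m * R) := by gcongr; norm_num

end IsPreExitArc

theorem x_small_while_r_large_general
    (n : ℕ) (m : ℝ) (hm : 0 < m)
    (f : ℝ → ℝ)
    (hlow : ∀ s : ℝ, m ≤ deriv f s) :
    ∃ C₂ R₀ : ℝ, 0 < C₂ ∧ 0 < R₀ ∧
      ∀ R : ℝ, R₀ ≤ R →
        ∀ x r θ : ℝ → ℝ, ∀ T : ℝ, 0 < T →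
          x 0 = 0 → r 0 = R → θ 0 = 0 →
          SolvesSystem n f x r θ (Set.Icc 0 T) →
          NoExit x r θ (Set.Ioo 0 T) →
          ∀ t ∈ Set.Ioo 0 T,
            -Real.pi ≤ θ t → θ t ≤ 0 → Real.sqrt (2 * ((n : ℝ) - 1) / m) ≤ r t →
            x t ≤ C₂ / R := by
  refine ⟨72 * π / m, √((64 * π + 16 * n) / m), by positivity, by positivity, ?_⟩
  intro R hR x r θ T _ hx0 hr0 hθ0 hsol hexit t ht _ hθt hrt
  have hRlarge : 64 * π + 16 * n ≤ m * R ^ 2 := by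
    have := (sqrt_le_iff.1 hR).2
    rw [div_le_iff₀ hm] at this
    linarith
  have harc : IsPreExitArc n m f x r θ R t :=
    { m_pos := hm, le_deriv := hlow, t_pos := ht.1, x_zero := hx0, r_zero := hr0,
      θ_zero := hθ0, solves := fun s hs => hsol s ⟨hs.1, hs.2.trans ht.2.le⟩,
      noExit := fun s hs => hexit s ⟨hs.1, hs.2.trans_lt ht.2⟩, θ_le := hθt, sqrt_le_r := hrt }
  rw [div_div]
  exact harc.x_le hRlarge

/-- For sufficiently large `R`, at every time before the first exit time at which
`-π ≤ θ_R ≤ 0` and `r_R ≥ √(2(n-1)/m)`, one has `x_R ≤ C₂/R`. -/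
theorem x_small_while_r_large
    (n : ℕ) (hn : 2 ≤ n) (m M : ℝ) (hm : 0 < m) (hmM : m ≤ M)
    (f : ℝ → ℝ) (hf : ContDiff ℝ 2 f)
    (hconv : ∀ s : ℝ, 0 ≤ deriv (deriv f) s)
    (hlow : ∀ s : ℝ, m ≤ deriv f s) (hup : ∀ s : ℝ, deriv f s ≤ M) :
    ∃ C₂ R₀ : ℝ, 0 < C₂ ∧ 0 < R₀ ∧
      ∀ R : ℝ, R₀ ≤ R →
        ∀ x r θ : ℝ → ℝ, ∀ T : ℝ, 0 < T →
          x 0 = 0 → r 0 = R → θ 0 = 0 →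
          SolvesSystem n f x r θ (Set.Icc 0 T) →
          NoExit x r θ (Set.Ioo 0 T) →
          ∀ t ∈ Set.Ioo 0 T,
            -Real.pi ≤ θ t → θ t ≤ 0 → Real.sqrt (2 * ((n : ℝ) - 1) / m) ≤ r t →
            x t ≤ C₂ / R :=
  x_small_while_r_large_general n m hm f hlow
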